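/- The category of mixed Hodge structures over a subfield k ⊆ ℝ is abelian; in particular every morphism of mixed Hodge structures is strict with respect to the weight filtration: if f : V → V' is a morphism of mixed Hodge structures, then f(V) ∩ W_m V' = f(W_m V) for all m. -/

import Mathlib

/-- The `m`-th graded piece `Gr^W_m V = W_m / W_{m-1}` of a filtered vector space. -/
abbrev grW {V : Type} [AddCommGroup V] [Module ℂ V] (W : ℤ → Submodule ℂ V) (m : ℤ) :=
  ↥(W m) ⧸ (Submodule.comap (W m).subtype (W (m - 1)))

/-- The filtration induced by a filtration `S` on the graded piece `Gr^W_m V`. -/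
noncomputable def grFil {V : Type} [AddCommGroup V] [Module ℂ V]
    (W S : ℤ → Submodule ℂ V) (m p : ℤ) : Submodule ℂ (grW W m) :=
  Submodule.map (Submodule.comap (W m).subtype (W (m - 1))).mkQ
    (Submodule.comap (W m).subtype (S p))

/-- A mixed Hodge structure, encoded on the complexification: a finite-dimensional
complex vector space `V` with a finite exhaustive increasing weight filtration `W`,
a finite decreasing Hodge filtration `F` and its conjugate filtration `G = F̄`,
such that for each `m` the filtrations induced by `F` and `G` on `Gr^W_m V` define
a pure Hodge structure of weight `m`, i.e. a bigrading
`Gr^W_m V = ⊕_{p+q=m} F^p ∩ G^q`. -/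
structure IsMHS {V : Type} [AddCommGroup V] [Module ℂ V]
    (W F G : ℤ → Submodule ℂ V) : Prop where
  fin : FiniteDimensional ℂ V
  monoW : Monotone W
  antiF : Antitone F
  antiG : Antitone G
  w_bot : ∃ a : ℤ, W a = ⊥
  w_top : ∃ b : ℤ, W b = ⊤
  f_top : ∃ a : ℤ, F a = ⊤
  f_bot : ∃ b : ℤ, F b = ⊥
  g_top : ∃ a : ℤ, G a = ⊤
  g_bot : ∃ b : ℤ, G b = ⊥
  pure : ∀ m : ℤ, DirectSum.IsInternal
    (fun p : ℤ => grFil W F m p ⊓ grFil W G m (m - p))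

/-- Deligne's subspace
`I^{p,q} = (F^p ∩ W_{p+q}) ∩ ((F̄^q ∩ W_{p+q}) + Σ_{i>0} (F̄^{q-i} ∩ W_{p+q-1-i}))`. -/
noncomputable def deligneI {V : Type} [AddCommGroup V] [Module ℂ V]
    (W F G : ℤ → Submodule ℂ V) (p q : ℤ) : Submodule ℂ V :=
  (F p ⊓ W (p + q)) ⊓
    ((G q ⊓ W (p + q)) ⊔
      ⨆ i : ℕ, (G (q - ((i : ℤ) + 1)) ⊓ W (p + q - 2 - (i : ℤ))))

/-!
Deligne's subspaces `I^{p,q}` split the weight filtration. Since `I^{p,q}` maps isomorphically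
onto the `(p,q)`-summand of `Gr^W_{p+q}`, induction on the weight gives
`W_m = Σ_{p+q ≤ m} I^{p,q}`, while the sum of the `I^{p,q}` with `p + q > m` meets `W_m`
trivially: peel off the top weight, where the pieces are independent in `Gr^W`.
A morphism maps each `I^{p,q}` into `I'^{p,q}`, so the part of `v` of weight `> m` goes to the
part of `f v` of weight `> m`, which vanishes as soon as `f v ∈ W'_m`.
-/

open Submodule

theorem disjoint_iSup_ker_of_iSupIndep_map {ι R M N : Type*} [Ring R] [AddCommGroup M]
    [Module R M] [AddCommGroup N] [Module R N] {f : M →ₗ[R] N} {K : ι → Submodule R M}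
    (hind : iSupIndep fun i => (K i).map f) (hK : ∀ i, Disjoint (K i) (LinearMap.ker f)) :
    Disjoint (⨆ i, K i) (LinearMap.ker f) := by
  rw [disjoint_def]
  intro x hx hfx
  obtain ⟨g, hg, rfl⟩ := (mem_iSup_iff_exists_finsupp K x).mp hx
  have hfg : ∀ i ∈ g.support, f (g i) = 0 :=
    (iSupIndep_iff_finsetSum_eq_zero_imp_eq_zero _).mp hind g.support (fun i => f (g i))
      (fun i _ => mem_map_of_mem (hg i)) (by rw [← map_sum]; exact hfx)
  exact Finset.sum_eq_zero fun i hi => disjoint_def.mp (hK i) _ (hg i) (hfg i hi)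

section Filtration

variable {V : Type} [AddCommGroup V] [Module ℂ V] {W : ℤ → Submodule ℂ V}

noncomputable def grW.mk (W : ℤ → Submodule ℂ V) (n : ℤ) : ↥(W n) →ₗ[ℂ] grW W n :=
  (comap (W n).subtype (W (n - 1))).mkQ

theorem grW.ker_mk (n : ℤ) : LinearMap.ker (grW.mk W n) = comap (W n).subtype (W (n - 1)) :=
  ker_mkQ _

theorem grW.mk_eq_zero_iff {n : ℤ} (x : ↥(W n)) : grW.mk W n x = 0 ↔ (x : V) ∈ W (n - 1) := by
  rw [← LinearMap.mem_ker, grW.ker_mk, mem_comap, subtype_apply]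

theorem grFil_eq_map (W S : ℤ → Submodule ℂ V) (n p : ℤ) :
    grFil W S n p = map (grW.mk W n) (comap (W n).subtype (S p)) := rfl

theorem grW.mk_mem_grFil_of_mem_sup (S : ℤ → Submodule ℂ V) {n t : ℤ} (hW : W (n - 1) ≤ W n)
    (x : ↥(W n)) (hx : (x : V) ∈ S t ⊔ W (n - 1)) : grW.mk W n x ∈ grFil W S n t := by
  obtain ⟨u, hu, w, hw, hx⟩ := mem_sup.mp hx
  have hwn : w ∈ W n := hW hw
  have hun : u ∈ W n := by
    rw [← add_sub_cancel_right u w, hx]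
    exact sub_mem x.2 hwn
  have hsplit : x = ⟨u, hun⟩ + ⟨w, hwn⟩ := Subtype.ext hx.symm
  rw [hsplit, map_add, (grW.mk_eq_zero_iff (⟨w, hwn⟩ : ↥(W n))).mpr hw, add_zero]
  exact mem_map_of_mem hu

theorem grFil_antitone {S : ℤ → Submodule ℂ V} (hS : Antitone S) (n : ℤ) :
    Antitone fun p => grFil W S n p :=
  fun _ _ hp => map_mono (comap_mono (hS hp))

end Filtration

section Deligne

variable {V : Type} [AddCommGroup V] [Module ℂ V] {W F G : ℤ → Submodule ℂ V}

noncomputable def deligneJ (W G : ℤ → Submodule ℂ V) (q m : ℤ) : Submodule ℂ V :=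
  (G q ⊓ W m) ⊔ ⨆ i : ℕ, (G (q - ((i : ℤ) + 1)) ⊓ W (m - 2 - (i : ℤ)))

theorem deligneI_eq_inf_deligneJ (W F G : ℤ → Submodule ℂ V) (p q : ℤ) :
    deligneI W F G p q = F p ⊓ W (p + q) ⊓ deligneJ W G q (p + q) := rfl

theorem deligneI_le_F (p q : ℤ) : deligneI W F G p q ≤ F p :=
  inf_le_left.trans inf_le_left

theorem deligneI_le_W (p q : ℤ) : deligneI W F G p q ≤ W (p + q) :=
  inf_le_left.trans inf_le_right

theorem deligneI_le_deligneJ (p q : ℤ) : deligneI W F G p q ≤ deligneJ W G q (p + q) :=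
  inf_le_right

theorem deligneJ_le_G_sup_W (hW : Monotone W) (hG : Antitone G) (q : ℤ) {n m : ℤ}
    (hn : n < m) : deligneJ W G q m ≤ G (q + n + 1 - m) ⊔ W (n - 1) := by
  refine sup_le (le_sup_of_le_left (inf_le_left.trans (hG (by omega)))) (iSup_le fun i => ?_)
  rcases le_or_gt (i : ℤ) (m - n - 2) with hi | hi
  · exact le_sup_of_le_left (inf_le_left.trans (hG (by omega)))
  · exact le_sup_of_le_right (inf_le_right.trans (hW (by omega)))

theorem deligneJ_le_deligneJ (hW : Monotone W) (hG : Antitone G) {s n q m : ℤ}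
    (hn : n ≤ m - 1) (hs : n - s ≤ m - 1 - q) : deligneJ W G s n ≤ deligneJ W G q m := by
  apply sup_le
  · rcases le_or_gt q s with hqs | hqs
    · exact le_sup_of_le_left (inf_le_inf (hG hqs) (hW (by omega)))
    · refine le_sup_of_le_right (le_iSup_of_le (q - 1 - s).toNat ?_)
      rw [show q - (((q - 1 - s).toNat : ℤ) + 1) = s by omega]
      exact inf_le_inf le_rfl (hW (by omega))
  · refine iSup_le fun j => ?_
    rcases le_or_gt q (s - (j + 1)) with hqs | hqs
    · exact le_sup_of_le_left (inf_le_inf (hG hqs) (hW (by omega)))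
    · refine le_sup_of_le_right (le_iSup_of_le (q - s + j).toNat ?_)
      rw [show q - (((q - s + j).toNat : ℤ) + 1) = s - ((j : ℤ) + 1) by omega]
      exact inf_le_inf le_rfl (hW (by omega))

noncomputable def deligneD (W F G : ℤ → Submodule ℂ V) (n : ℤ) : Submodule ℂ V :=
  ⨆ p : ℤ, deligneI W F G p (n - p)

theorem deligneI_sub_le_W (p n : ℤ) : deligneI W F G p (n - p) ≤ W n :=
  (deligneI_le_W p (n - p)).trans_eq (by rw [add_sub_cancel])

theorem deligneD_le_W (n : ℤ) : deligneD W F G n ≤ W n :=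
  iSup_le fun p => deligneI_sub_le_W p n

end Deligne

namespace IsMHS

variable {V : Type} [AddCommGroup V] [Module ℂ V] {W F G : ℤ → Submodule ℂ V}

theorem grFil_inf_grFil_eq_bot (h : IsMHS W F G) {n p q : ℤ} (hpq : n < p + q) :
    grFil W F n p ⊓ grFil W G n q = ⊥ := by
  have hdisj := (h.pure n).submodule_iSupIndep.pairwiseDisjoint (show n + 1 - q ≠ n - q by omega)
  have hF := grFil_antitone (W := W) h.antiF n
  have hG := grFil_antitone (W := W) h.antiG n
  refine disjoint_self.mp (hdisj.mono ?_ ?_) <;>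
    exact inf_le_inf (hF (by omega)) (hG (by omega))

theorem deligneI_inf_W_le_W_pred (h : IsMHS W F G) {n p q : ℤ} (hn : n < p + q) :
    deligneI W F G p q ⊓ W n ≤ W (n - 1) := by
  rintro x ⟨hxI, hxn⟩
  have hW : W (n - 1) ≤ W n := h.monoW (by omega)
  have hxG := deligneJ_le_G_sup_W h.monoW h.antiG q hn (deligneI_le_deligneJ p q hxI)
  have hmk : grW.mk W n ⟨x, hxn⟩ ∈ grFil W F n p ⊓ grFil W G n (q + n + 1 - (p + q)) :=
    ⟨grW.mk_mem_grFil_of_mem_sup F hW _ (mem_sup_left (deligneI_le_F p q hxI)),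
      grW.mk_mem_grFil_of_mem_sup G hW _ hxG⟩
  rw [h.grFil_inf_grFil_eq_bot (by omega), mem_bot, grW.mk_eq_zero_iff] at hmk
  exact hmk

theorem disjoint_deligneI_W (h : IsMHS W F G) (p q : ℤ) :
    Disjoint (deligneI W F G p q) (W (p + q - 1)) := by
  obtain ⟨a, ha⟩ := h.w_bot
  have hdesc : ∀ n ≤ p + q - 1, deligneI W F G p q ⊓ W (p + q - 1) ≤ W n := by
    intro n hn
    induction n, hn using Int.leInductionDown with
    | base => exact inf_le_right
    | pred n hn ih => exact (le_inf inf_le_left ih).trans (h.deligneI_inf_W_le_W_pred (by omega))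
  rw [disjoint_iff, eq_bot_iff, ← ha]
  exact (hdesc _ (min_le_right a _)).trans (h.monoW (min_le_left _ _))

theorem map_mk_deligneI_le (h : IsMHS W F G) (n p : ℤ) :
    map (grW.mk W n) (comap (W n).subtype (deligneI W F G p (n - p))) ≤
      grFil W F n p ⊓ grFil W G n (n - p) := by
  rintro _ ⟨x, hx, rfl⟩
  have hW : W (n - 1) ≤ W n := h.monoW (by omega)
  have hxG := deligneJ_le_G_sup_W h.monoW h.antiG (n - p) (show n - 1 < p + (n - p) by omega)
    (deligneI_le_deligneJ p (n - p) hx)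
  refine ⟨grW.mk_mem_grFil_of_mem_sup F hW _ (mem_sup_left (deligneI_le_F p _ hx)),
    grW.mk_mem_grFil_of_mem_sup G hW _ ?_⟩
  rw [show n - p + (n - 1) + 1 - (p + (n - p)) = n - p by ring] at hxG
  exact (sup_le_sup_left (h.monoW (by omega)) _) hxG

theorem disjoint_deligneD_W (h : IsMHS W F G) (n : ℤ) :
    Disjoint (deligneD W F G n) (W (n - 1)) := by
  set K : ℤ → Submodule ℂ ↥(W n) := fun p => comap (W n).subtype (deligneI W F G p (n - p))
  have hind : iSupIndep fun p => (K p).map (grW.mk W n) :=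
    (h.pure n).submodule_iSupIndep.mono fun p => h.map_mk_deligneI_le n p
  have hK : ∀ p, Disjoint (K p) (LinearMap.ker (grW.mk W n)) := by
    intro p
    rw [grW.ker_mk, disjoint_def]
    intro x hxI hxW
    have := disjoint_def.mp (h.disjoint_deligneI_W p (n - p)) x hxI
    exact Subtype.ext (this (by rwa [show p + (n - p) - 1 = n - 1 by ring]))
  have hmap := disjoint_map (W n).injective_subtype (disjoint_iSup_ker_of_iSupIndep_map hind hK)
  rwa [Submodule.map_iSup, grW.ker_mk, map_comap_subtype, inf_eq_right.mpr (h.monoW (by omega)),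
    iSup_congr fun p => (map_comap_subtype _ _).trans (inf_eq_right.mpr (deligneI_sub_le_W p n))]
    at hmap

theorem W_pred_le_F_sup_deligneJ (h : IsMHS W F G) {m : ℤ}
    (hT : W (m - 1) ≤ ⨆ n ≤ m - 1, deligneD W F G n) (p : ℤ) :
    W (m - 1) ≤ F p ⊓ W (m - 1) ⊔ deligneJ W G (m - p) m := by
  refine hT.trans (iSup₂_le fun n hn => iSup_le fun r => ?_)
  rcases le_or_gt p r with hpr | hrp
  · exact le_sup_of_le_left
      (le_inf ((deligneI_le_F _ _).trans (h.antiF hpr)) ((deligneI_sub_le_W r n).trans (h.monoW hn)))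
  · exact le_sup_of_le_right ((deligneI_le_deligneJ r (n - r)).trans
      (deligneJ_le_deligneJ h.monoW h.antiG (by omega) (by omega)))

theorem grFil_inf_le_map_mk_deligneI (h : IsMHS W F G) {m p : ℤ}
    (hsplit : W (m - 1) ≤ F p ⊓ W (m - 1) ⊔ deligneJ W G (m - p) m) :
    grFil W F m p ⊓ grFil W G m (m - p) ≤
      map (grW.mk W m) (comap (W m).subtype (deligneI W F G p (m - p))) := by
  rintro ξ ⟨hξF, hξG⟩
  rw [grFil_eq_map] at hξF hξG
  obtain ⟨u, hu : (u : V) ∈ F p, rfl⟩ := hξF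
  obtain ⟨v, hv : (v : V) ∈ G (m - p), hvu⟩ := hξG
  have huv : ((u - v : ↥(W m)) : V) ∈ W (m - 1) := by
    rw [← grW.mk_eq_zero_iff, map_sub, hvu, sub_self]
  obtain ⟨a, ⟨haF, haW⟩, b, hb, hab⟩ := mem_sup.mp (hsplit huv)
  have haW' : a ∈ W m := h.monoW (by omega) haW
  -- `u - a = v + b` lies in `F^p ∩ W_m` and in `(G^{m-p} ∩ W_m) + J`, i.e. in `I^{p,m-p}`
  have hI : (u : V) - a ∈ deligneI W F G p (m - p) := by
    rw [deligneI_eq_inf_deligneJ, add_sub_cancel]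
    refine ⟨⟨sub_mem hu haF, sub_mem u.2 haW'⟩, ?_⟩
    have hb' : b = u - v - a := by rw [← Submodule.coe_sub, ← hab]; abel
    rw [show (u : V) - a = v + b by rw [hb']; abel]
    exact add_mem (mem_sup_left ⟨hv, v.2⟩) hb
  refine ⟨u - ⟨a, haW'⟩, hI, ?_⟩
  rw [map_sub, (grW.mk_eq_zero_iff (⟨a, haW'⟩ : ↥(W m))).mpr haW, sub_zero]

theorem W_le_W_pred_sup_deligneD (h : IsMHS W F G) {m : ℤ}
    (hT : W (m - 1) ≤ ⨆ n ≤ m - 1, deligneD W F G n) :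
    W m ≤ W (m - 1) ⊔ deligneD W F G m := by
  have htop : map (grW.mk W m) (comap (W m).subtype (deligneD W F G m)) = ⊤ := by
    refine eq_top_iff.mpr ((h.pure m).submodule_iSup_eq_top.ge.trans (iSup_le fun p => ?_))
    exact (h.grFil_inf_le_map_mk_deligneI (h.W_pred_le_F_sup_deligneJ hT p)).trans
      (map_mono (comap_mono (le_iSup (fun p => deligneI W F G p (m - p)) p)))
  rw [grW.mk, map_mkQ_eq_top] at htop
  have hsub := congrArg (map (W m).subtype) htop
  rw [Submodule.map_sup, map_comap_subtype, map_comap_subtype, map_subtype_top] at hsub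
  exact hsub.ge.trans (sup_le_sup inf_le_right inf_le_right)

theorem W_le_iSup_deligneD (h : IsMHS W F G) (m : ℤ) : W m ≤ ⨆ n ≤ m, deligneD W F G n := by
  obtain ⟨a, ha⟩ := h.w_bot
  rcases le_total m a with hma | ham
  · exact (h.monoW hma).trans (ha.le.trans bot_le)
  induction m, ham using Int.leInduction with
  | base => exact ha.le.trans bot_le
  | succ m _ ih =>
    rw [← add_sub_cancel_right m 1] at ih
    refine (h.W_le_W_pred_sup_deligneD ih).trans (sup_le ?_ (le_iSup₂_of_le (m + 1) le_rfl le_rfl))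
    exact ih.trans (biSup_mono fun n hn => by omega)

theorem exists_W_sup_biSup_deligneD_eq_top (h : IsMHS W F G) (m : ℤ) :
    ∃ s : Finset ℤ, (∀ n ∈ s, m < n) ∧ W m ⊔ ⨆ n ∈ s, deligneD W F G n = ⊤ := by
  obtain ⟨b, hb⟩ := h.w_top
  refine ⟨Finset.Ioc m b, fun n hn => (Finset.mem_Ioc.mp hn).1, eq_top_iff.mpr ?_⟩
  rw [← hb]
  refine (h.W_le_iSup_deligneD b).trans (iSup₂_le fun n hn => ?_)
  rcases le_or_gt n m with hnm | hmn
  · exact le_sup_of_le_left ((deligneD_le_W n).trans (h.monoW hnm))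
  · exact le_sup_of_le_right (le_iSup₂_of_le n (Finset.mem_Ioc.mpr ⟨hmn, hn⟩) le_rfl)

theorem disjoint_W_biSup_deligneD (h : IsMHS W F G) {m : ℤ} (s : Finset ℤ)
    (hs : ∀ n ∈ s, m < n) : Disjoint (W m) (⨆ n ∈ s, deligneD W F G n) := by
  classical
  induction s using Finset.induction_on_max with
  | empty => simp
  | insert a s hlt ih =>
    rw [Finset.iSup_insert, sup_comm]
    have hma := hs a (Finset.mem_insert_self a s)
    refine (ih fun n hn => hs n (Finset.mem_insert_of_mem hn))
      |>.disjoint_sup_right_of_disjoint_sup_left ((h.disjoint_deligneD_W a).symm.mono_left ?_)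
    refine sup_le (h.monoW (by omega)) (iSup₂_le fun n hn => ?_)
    exact (deligneD_le_W n).trans (h.monoW (by have := hlt n hn; omega))

end IsMHS

section Morphism

variable {V V' : Type} [AddCommGroup V] [Module ℂ V] [AddCommGroup V'] [Module ℂ V']
  {W F G : ℤ → Submodule ℂ V} {W' F' G' : ℤ → Submodule ℂ V'} {f : V →ₗ[ℂ] V'}

theorem map_deligneD_le (hW : ∀ m : ℤ, map f (W m) ≤ W' m)
    (hF : ∀ p : ℤ, map f (F p) ≤ F' p) (hG : ∀ q : ℤ, map f (G q) ≤ G' q) (n : ℤ) :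
    map f (deligneD W F G n) ≤ deligneD W' F' G' n := by
  have hinf : ∀ {A B : Submodule ℂ V} {A' B' : Submodule ℂ V'},
      map f A ≤ A' → map f B ≤ B' → map f (A ⊓ B) ≤ A' ⊓ B' :=
    fun hA hB => (map_inf_le f).trans (inf_le_inf hA hB)
  rw [deligneD, Submodule.map_iSup]
  refine iSup_mono fun p => ?_
  rw [deligneI_eq_inf_deligneJ, deligneI_eq_inf_deligneJ, deligneJ, deligneJ]
  refine hinf (hinf (hF p) (hW _)) ?_
  rw [Submodule.map_sup, Submodule.map_iSup]
  exact sup_le_sup (hinf (hG _) (hW _)) (iSup_mono fun i => hinf (hG _) (hW _))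

end Morphism

/-- The category of mixed Hodge structures is abelian; in particular every morphism
of mixed Hodge structures is strict with respect to the weight filtration:
`f(V) ∩ W_m V' = f(W_m V)` for all `m`. -/
theorem mhs_morphism_strict
    {V V' : Type} [AddCommGroup V] [Module ℂ V] [AddCommGroup V'] [Module ℂ V']
    (W F G : ℤ → Submodule ℂ V) (W' F' G' : ℤ → Submodule ℂ V')
    (h : IsMHS W F G) (h' : IsMHS W' F' G')
    (f : V →ₗ[ℂ] V')
    (hW : ∀ m : ℤ, Submodule.map f (W m) ≤ W' m)
    (hF : ∀ p : ℤ, Submodule.map f (F p) ≤ F' p)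
    (hG : ∀ q : ℤ, Submodule.map f (G q) ≤ G' q) :
    ∀ m : ℤ, LinearMap.range f ⊓ W' m = Submodule.map f (W m) := by
  intro m
  obtain ⟨s, hs, htop⟩ := h.exists_W_sup_biSup_deligneD_eq_top m
  set U' := ⨆ n ∈ s, deligneD W' F' G' n
  have hrange : LinearMap.range f ≤ map f (W m) ⊔ U' := by
    rw [LinearMap.range_eq_map, ← htop, Submodule.map_sup]
    refine sup_le_sup_left ?_ _
    simp only [Submodule.map_iSup]
    exact iSup₂_mono fun n _ => map_deligneD_le hW hF hG n
  refine le_antisymm ?_ (le_inf LinearMap.map_le_range (hW m))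
  calc LinearMap.range f ⊓ W' m ≤ (map f (W m) ⊔ U') ⊓ W' m := inf_le_inf_right _ hrange
    _ = map f (W m) ⊔ U' ⊓ W' m := sup_inf_assoc_of_le _ (hW m)
    _ = map f (W m) := by
      rw [inf_comm, (h'.disjoint_W_biSup_deligneD s hs).eq_bot, sup_bot_eq]
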